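/- Let A be a diagonalizable d×d real matrix with positive distinct eigenvalues λ₁ < … < λ_{d*}, let λ > 0, let p(t) be an ℝᵈ-valued polynomial, and let g : [T,∞) → ℝᵈ be continuous with |g(t)| = O(e^{-αt}) for some α > 0. Suppose y ∈ C¹([T,∞), ℝᵈ) solves y' = −(A − λ I)y + p(t) + g(t), and, in case λ > λ₁, assume e^{(λ̄−λ)t}|y(t)| → 0 where λ̄ = max{λ_j : λ_j < λ}. Then there exists a unique ℝᵈ-valued polynomial q(t) such that q' = −(A − λ I)q + p on ℝ, and |y(t) − q(t)| = O(e^{-εt}) for some ε > 0. -/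

import Mathlib

/-!
In an eigenbasis of `A` the system decouples into scalar equations `z' = μ z + P(t) + G(t)`
with `μ = λ - λⱼ`, `P` polynomial and `G = O(e^{-αt})`. Subtracting a polynomial solution `Q₀`
of `Q' = μ Q + P` leaves `w' = μ w + G`, and `u = e^{-μt} w` has `u' = e^{-μt} G`.
If `μ < 0`, integrating `u'` from a fixed time shows that `w` decays exponentially.
If `μ ≥ 0`, `u'` is integrable at infinity, so `w = L e^{μt} + O(e^{-αt})`; the free mode
`L e^{μt}` is a constant when `μ = 0` (absorbed into the polynomial), and vanishes when `μ > 0`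
because of the growth condition on `y`. Uniqueness holds because a polynomial tending to `0`
at infinity vanishes.
-/

open Matrix Set

/-- `q : ℝ → E` is an `E`-valued polynomial function. -/
def IsPolyFun {E : Type*} [AddCommGroup E] [Module ℝ E] (q : ℝ → E) : Prop :=
  ∃ (n : ℕ) (c : Fin (n + 1) → E), ∀ t : ℝ, q t = ∑ i : Fin (n + 1), t ^ (i : ℕ) • c i

open Filter Topology Real Polynomial Asymptotics

lemma tendsto_exp_neg_mul_atTop_nhds_zero {ε : ℝ} (hε : 0 < ε) :
    Tendsto (fun t => exp (-ε * t)) atTop (𝓝 0) := by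
  simpa only [neg_mul, Function.comp_def, id] using
    tendsto_exp_neg_atTop_nhds_zero.comp (tendsto_id.const_mul_atTop hε)

lemma tendsto_exp_mul_mul_of_le {f : ℝ → ℝ} (hf : ∀ t, 0 ≤ f t) {a b : ℝ} (hba : b ≤ a)
    (h : Tendsto (fun t => exp (a * t) * f t) atTop (𝓝 0)) :
    Tendsto (fun t => exp (b * t) * f t) atTop (𝓝 0) := by
  refine squeeze_zero' (Eventually.of_forall fun t => mul_nonneg (exp_pos _).le (hf t)) ?_ h
  filter_upwards [eventually_ge_atTop 0] with t ht
  gcongr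
  exact hf t

lemma isBigO_exp_neg_mul_of_le {ε α : ℝ} (h : ε ≤ α) :
    (fun t => exp (-α * t)) =O[atTop] fun t => exp (-ε * t) := by
  refine isBigO_iff.2 ⟨1, ?_⟩
  filter_upwards [eventually_ge_atTop 0] with t ht
  simp only [norm_of_nonneg (exp_pos _).le, one_mul, exp_le_exp]
  nlinarith

lemma isBigO_exp_neg_mul_iff {E : Type*} [Norm E] {f : ℝ → E} {ε : ℝ} :
    (f =O[atTop] fun t => exp (-ε * t)) ↔ ∃ C T', ∀ t ≥ T', ‖f t‖ ≤ C * exp (-ε * t) := by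
  simp only [isBigO_iff, eventually_atTop, norm_of_nonneg (exp_pos _).le]

section ExponentialRate

variable {E : Type*} [NormedAddCommGroup E] [NormedSpace ℝ E] {f f' : ℝ → E} {a c : ℝ}

lemma norm_sub_le_of_norm_deriv_le_exp {κ : ℝ} (hκ : κ ≠ 0)
    (hf : ∀ t ∈ Ici a, HasDerivWithinAt f (f' t) (Ici a) t)
    (hbound : ∀ t ≥ a, ‖f' t‖ ≤ c * exp (κ * t)) {t : ℝ} (ht : a ≤ t) :
    ‖f t - f a‖ ≤ c / κ * (exp (κ * t) - exp (κ * a)) := by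
  have hB (x : ℝ) :
      HasDerivAt (fun x => c / κ * (exp (κ * x) - exp (κ * a))) (c * exp (κ * x)) x := by
    refine ((((hasDerivAt_id x).const_mul κ).exp.sub_const _).const_mul (c / κ)).congr_deriv ?_
    field_simp
    simp
  refine image_norm_le_of_norm_deriv_right_le_deriv_boundary (f := fun x => f x - f a) (f' := f')
    (fun x hx => ((hf x hx.1).continuousWithinAt.mono Icc_subset_Ici_self).sub
      continuousWithinAt_const)
    (fun x hx => ((hf x hx.1).mono (Ici_subset_Ici.2 hx.1)).sub_const (f a))
    (by simp) hB (fun x hx => hbound x hx.1) ⟨ht, le_rfl⟩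

lemma exists_tendsto_norm_sub_le_of_norm_deriv_le_exp [CompleteSpace E] {β : ℝ} (hβ : 0 < β)
    (hf : ∀ t ∈ Ici a, HasDerivWithinAt f (f' t) (Ici a) t)
    (hbound : ∀ t ≥ a, ‖f' t‖ ≤ c * exp (-(β * t))) :
    ∃ L, Tendsto f atTop (𝓝 L) ∧ ∀ t ≥ a, ‖f t - L‖ ≤ c / β * exp (-(β * t)) := by
  have hc : 0 ≤ c :=
    nonneg_of_mul_nonneg_left ((norm_nonneg _).trans (hbound a le_rfl)) (exp_pos _)
  have hstep : ∀ s ≥ a, ∀ t ≥ s, ‖f t - f s‖ ≤ c / β * exp (-(β * s)) := by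
    intro s hs t hst
    calc ‖f t - f s‖ ≤ c / -β * (exp (-β * t) - exp (-β * s)) :=
          norm_sub_le_of_norm_deriv_le_exp (neg_ne_zero.2 hβ.ne')
            (fun x hx => (hf x (hs.trans hx)).mono (Ici_subset_Ici.2 hs))
            (fun x hx => by simpa only [neg_mul] using hbound x (hs.trans hx)) hst
      _ = c / β * exp (-(β * s)) - c / β * exp (-(β * t)) := by
          simp only [div_neg, neg_mul]; ring
      _ ≤ c / β * exp (-(β * s)) := sub_le_self _ (by positivity)
  have hsmall : Tendsto (fun s => c / β * exp (-(β * s))) atTop (𝓝 0) := by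
    simpa [neg_mul] using (tendsto_exp_neg_mul_atTop_nhds_zero hβ).const_mul (c / β)
  obtain ⟨L, hL⟩ : ∃ L, Tendsto f atTop (𝓝 L) := by
    refine cauchySeq_tendsto_of_complete (Metric.cauchySeq_iff'.2 fun ε hε => ?_)
    obtain ⟨N, hN, hNa⟩ := ((hsmall.eventually (gt_mem_nhds hε)).and (eventually_ge_atTop a)).exists
    exact ⟨N, fun n hn => (dist_eq_norm _ _).trans_lt ((hstep N hNa n hn).trans_lt hN)⟩
  refine ⟨L, hL, fun t ht => le_of_tendsto ((tendsto_const_nhds.sub hL).norm) ?_⟩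
  filter_upwards [eventually_ge_atTop t] with s hs
  rw [norm_sub_rev]
  exact hstep t ht s hs

end ExponentialRate

namespace Polynomial

lemma exists_derivative_eq (P : ℝ[X]) : ∃ Q : ℝ[X], derivative Q = P := by
  induction P using Polynomial.induction_on' with
  | add P₁ P₂ h₁ h₂ =>
    obtain ⟨Q₁, rfl⟩ := h₁
    obtain ⟨Q₂, rfl⟩ := h₂
    exact ⟨Q₁ + Q₂, derivative_add⟩
  | monomial n a =>
    refine ⟨monomial (n + 1) (a / (n + 1)), ?_⟩
    rw [derivative_monomial]
    push_cast
    field_simp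

lemma exists_derivative_eq_C_mul_add (μ : ℝ) (P : ℝ[X]) :
    ∃ Q : ℝ[X], derivative Q = C μ * Q + P := by
  rcases eq_or_ne μ 0 with rfl | hμ
  · simpa using P.exists_derivative_eq
  -- the Neumann series `Q = -∑ₖ μ^{-(k+1)} P^{(k)}`, finite because `P^{(deg P + 1)} = 0`
  refine ⟨-∑ k ∈ Finset.range (P.natDegree + 1), C (μ⁻¹ ^ (k + 1)) * derivative^[k] P, ?_⟩
  have hvanish : derivative^[P.natDegree + 1] P = 0 :=
    iterate_derivative_eq_zero (Nat.lt_succ_self _)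
  have hμk (k : ℕ) : μ * μ⁻¹ ^ (k + 1) = μ⁻¹ ^ k := by
    rw [pow_succ', ← mul_assoc, mul_inv_cancel₀ hμ, one_mul]
  rw [derivative_neg, derivative_sum, mul_neg, Finset.mul_sum]
  simp only [derivative_C_mul, ← Function.iterate_succ_apply' derivative, ← mul_assoc, ← C_mul]
  rw [Finset.sum_range_succ, hvanish, mul_zero, add_zero, Finset.sum_range_succ' _ P.natDegree]
  simp only [hμk, Nat.succ_eq_add_one, zero_add, pow_zero, C_1, one_mul,
    Function.iterate_zero_apply]
  abel

lemma tendsto_exp_neg_mul_mul_eval {μ : ℝ} (hμ : 0 < μ) (P : ℝ[X]) :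
    Tendsto (fun t => exp (-(μ * t)) * P.eval t) atTop (𝓝 0) := by
  refine ((P.comp (C μ⁻¹ * X)).tendsto_div_exp_atTop.comp
    (tendsto_id.const_mul_atTop hμ)).congr fun t => ?_
  simp only [Function.comp_apply, eval_comp, eval_mul, eval_C, eval_X, id_eq, exp_neg]
  field_simp

end Polynomial

section ScalarLinearODE

variable {w G : ℝ → ℝ} {T μ α c : ℝ}

lemma hasDerivWithinAt_exp_neg_mul_mul
    (hw : ∀ t ∈ Ici T, HasDerivWithinAt w (μ * w t + G t) (Ici T) t) :
    ∀ t ∈ Ici T, HasDerivWithinAt (fun s => exp (-(μ * s)) * w s)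
      (exp (-(μ * t)) * G t) (Ici T) t := by
  intro t ht
  have he : HasDerivAt (fun s => exp (-(μ * s))) (exp (-(μ * t)) * -μ) t := by
    simpa using ((hasDerivAt_id t).const_mul μ).neg.exp
  refine (he.hasDerivWithinAt.mul (hw t ht)).congr_deriv ?_
  ring

lemma exists_tendsto_abs_sub_mul_exp_le (hμ : 0 ≤ μ) (hα : 0 < α)
    (hw : ∀ t ∈ Ici T, HasDerivWithinAt w (μ * w t + G t) (Ici T) t)
    (hG : ∀ t ≥ T, |G t| ≤ c * exp (-(α * t))) :
    ∃ L, Tendsto (fun t => exp (-(μ * t)) * w t) atTop (𝓝 L) ∧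
      ∀ t ≥ T, |w t - L * exp (μ * t)| ≤ c / (μ + α) * exp (-(α * t)) := by
  obtain ⟨L, hL, hbound⟩ := exists_tendsto_norm_sub_le_of_norm_deriv_le_exp (β := μ + α) (by linarith)
    (hasDerivWithinAt_exp_neg_mul_mul hw) fun t ht => by
      rw [norm_mul, norm_of_nonneg (exp_pos _).le, Real.norm_eq_abs]
      calc exp (-(μ * t)) * |G t| ≤ exp (-(μ * t)) * (c * exp (-(α * t))) := by
            gcongr; exact hG t ht
        _ = c * exp (-((μ + α) * t)) := by rw [mul_left_comm, ← exp_add]; ring_nf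
  refine ⟨L, hL, fun t ht => ?_⟩
  have h := hbound t ht
  rw [Real.norm_eq_abs] at h
  calc |w t - L * exp (μ * t)| = exp (μ * t) * |exp (-(μ * t)) * w t - L| := by
        rw [← abs_of_pos (exp_pos (μ * t)), ← abs_mul, abs_of_pos (exp_pos (μ * t)), mul_sub,
          ← mul_assoc, ← exp_add, add_neg_cancel, exp_zero, one_mul, mul_comm]
    _ ≤ exp (μ * t) * (c / (μ + α) * exp (-((μ + α) * t))) := by gcongr
    _ = c / (μ + α) * exp (-(α * t)) := by rw [mul_left_comm, ← exp_add]; ring_nf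

lemma exists_abs_le_exp_of_neg {ε : ℝ} (hεα : ε ≤ α) (hεμ : ε < -μ)
    (hw : ∀ t ∈ Ici T, HasDerivWithinAt w (μ * w t + G t) (Ici T) t)
    (hG : ∀ t ≥ T, |G t| ≤ c * exp (-(α * t))) :
    ∃ K, ∀ t ≥ max T 0, |w t| ≤ K * exp (-(ε * t)) := by
  set T₁ := max T 0
  set u := fun s => exp (-(μ * s)) * w s
  have hν : 0 < -μ - ε := by linarith
  have hc : 0 ≤ c := nonneg_of_mul_nonneg_left ((abs_nonneg _).trans (hG T le_rfl)) (exp_pos _)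
  have hu : ∀ t ∈ Ici T₁, HasDerivWithinAt u (exp (-(μ * t)) * G t) (Ici T₁) t := fun t ht =>
    (hasDerivWithinAt_exp_neg_mul_mul hw t (mem_Ici.2 (le_trans (le_max_left _ _) ht))).mono
      (Ici_subset_Ici.2 (le_max_left T 0))
  have hu' : ∀ s ≥ T₁, ‖exp (-(μ * s)) * G s‖ ≤ c * exp ((-μ - ε) * s) := fun s hs => by
    have hs0 : 0 ≤ s := le_trans (le_max_right _ _) hs
    rw [norm_mul, norm_of_nonneg (exp_pos _).le, Real.norm_eq_abs]
    calc exp (-(μ * s)) * |G s| ≤ exp (-(μ * s)) * (c * exp (-(α * s))) := by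
          gcongr; exact hG s (le_trans (le_max_left _ _) hs)
      _ = c * exp ((-μ - α) * s) := by rw [mul_left_comm, ← exp_add]; ring_nf
      _ ≤ c * exp ((-μ - ε) * s) := by gcongr
  refine ⟨|u T₁| + c / (-μ - ε), fun t ht => ?_⟩
  have ht0 : 0 ≤ t := le_trans (le_max_right _ _) ht
  have hut : |u t| ≤ |u T₁| + c / (-μ - ε) * exp ((-μ - ε) * t) := by
    have h := norm_sub_le_of_norm_deriv_le_exp hν.ne' hu hu' ht
    rw [Real.norm_eq_abs] at h
    have := abs_sub_abs_le_abs_sub (u t) (u T₁)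
    have : c / (-μ - ε) * exp ((-μ - ε) * T₁) ≥ 0 := by positivity
    nlinarith
  calc |w t| = exp (μ * t) * |u t| := by
        simp only [u, abs_mul, abs_of_pos (exp_pos _), ← mul_assoc, ← exp_add, add_neg_cancel,
          exp_zero, one_mul]
    _ ≤ exp (μ * t) * (|u T₁| + c / (-μ - ε) * exp ((-μ - ε) * t)) := by gcongr
    _ = exp (μ * t) * |u T₁| + c / (-μ - ε) * exp (-(ε * t)) := by
        rw [mul_add, mul_left_comm, ← exp_add]; ring_nf
    _ ≤ exp (-(ε * t)) * |u T₁| + c / (-μ - ε) * exp (-(ε * t)) := by gcongr; nlinarith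
    _ = (|u T₁| + c / (-μ - ε)) * exp (-(ε * t)) := by ring

lemma exists_polynomial_sub_isBigO {z : ℝ → ℝ} {ε : ℝ} (P : ℝ[X]) (hα : 0 < α)
    (hz : ∀ t ∈ Ici T, HasDerivWithinAt z (μ * z t + P.eval t + G t) (Ici T) t)
    (hG : ∀ t ≥ T, |G t| ≤ c * exp (-(α * t)))
    (hside : 0 < μ → Tendsto (fun t => exp (-(μ * t)) * z t) atTop (𝓝 0))
    (hεα : ε ≤ α) (hεμ : μ < 0 → ε < -μ) :
    ∃ Q : ℝ[X], derivative Q = C μ * Q + P ∧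
      (fun t => z t - Q.eval t) =O[atTop] fun t => exp (-ε * t) := by
  obtain ⟨Q₀, hQ₀⟩ := exists_derivative_eq_C_mul_add μ P
  have hw : ∀ t ∈ Ici T, HasDerivWithinAt (fun s => z s - Q₀.eval s)
      (μ * (z t - Q₀.eval t) + G t) (Ici T) t := fun t ht =>
    ((hz t ht).sub (Q₀.hasDerivAt t).hasDerivWithinAt).congr_deriv
      (by rw [hQ₀, eval_add, eval_mul, eval_C]; ring)
  rcases lt_or_ge μ 0 with hμ | hμ
  · obtain ⟨K, hK⟩ := exists_abs_le_exp_of_neg hεα (hεμ hμ) hw hG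
    refine ⟨Q₀, hQ₀, isBigO_iff.2 ⟨K, ?_⟩⟩
    filter_upwards [eventually_ge_atTop (max T 0)] with t ht
    simpa [abs_of_pos (exp_pos _)] using hK t ht
  obtain ⟨L, hL, hbound⟩ := exists_tendsto_abs_sub_mul_exp_le hμ hα hw hG
  have hμL : μ * L = 0 := by
    rcases hμ.eq_or_lt with rfl | hμ
    · exact zero_mul L
    refine mul_eq_zero_of_right μ (tendsto_nhds_unique hL ?_)
    simpa [mul_sub] using (hside hμ).sub (Q₀.tendsto_exp_neg_mul_mul_eval hμ)
  have hLexp (t : ℝ) : L * exp (μ * t) = L := by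
    rcases mul_eq_zero.1 hμL with h | h <;> simp [h]
  refine ⟨Q₀ + C L, ?_,
    (isBigO_iff.2 ⟨c / (μ + α), ?_⟩).trans (isBigO_exp_neg_mul_of_le hεα)⟩
  · rw [derivative_add, derivative_C, hQ₀, mul_add, ← C_mul, hμL, C_0]
    ring
  filter_upwards [eventually_ge_atTop T] with t ht
  simpa [hLexp, sub_sub, abs_of_pos (exp_pos _)] using hbound t ht

end ScalarLinearODE

section PolyFun

variable {E : Type*}

lemma IsPolyFun.exists_eval_eq [AddCommGroup E] [Module ℝ E] {q : ℝ → E} (hq : IsPolyFun q)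
    (ℓ : E →ₗ[ℝ] ℝ) : ∃ P : ℝ[X], ∀ t, ℓ (q t) = P.eval t := by
  obtain ⟨n, c, hc⟩ := hq
  refine ⟨∑ i : Fin (n + 1), C (ℓ (c i)) * X ^ (i : ℕ), fun t => ?_⟩
  simp only [hc, map_sum, map_smul, smul_eq_mul, eval_finsetSum, eval_mul, eval_C, eval_pow,
    eval_X, mul_comm]

lemma isPolyFun_sum_eval_smul [AddCommGroup E] [Module ℝ E] {ι : Type*} [Fintype ι]
    (Q : ι → ℝ[X]) (v : ι → E) : IsPolyFun fun t => ∑ j, (Q j).eval t • v j := by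
  refine ⟨Finset.univ.sup fun j => (Q j).natDegree, fun i => ∑ j, (Q j).coeff i • v j,
    fun t => ?_⟩
  simp only [Finset.smul_sum, smul_smul]
  rw [Finset.sum_comm]
  refine Finset.sum_congr rfl fun j _ => ?_
  rw [eval_eq_sum_range' (Nat.lt_succ_of_le (Finset.le_sup (f := fun j => (Q j).natDegree)
    (Finset.mem_univ j))), Finset.sum_smul,
    ← Fin.sum_univ_eq_sum_range (fun i => ((Q j).coeff i * t ^ i) • v j)]
  simp only [mul_comm]

lemma IsPolyFun.eq_of_tendsto_sub [NormedAddCommGroup E] [NormedSpace ℝ E] {q₁ q₂ : ℝ → E}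
    (h₁ : IsPolyFun q₁) (h₂ : IsPolyFun q₂)
    (h : Tendsto (fun t => q₁ t - q₂ t) atTop (𝓝 0)) : q₁ = q₂ := by
  funext t
  rw [← sub_eq_zero]
  refine SeparatingDual.eq_zero_of_forall_dual_eq_zero (R := ℝ) fun ℓ => ?_
  obtain ⟨P₁, hP₁⟩ := h₁.exists_eval_eq ℓ.toLinearMap
  obtain ⟨P₂, hP₂⟩ := h₂.exists_eval_eq ℓ.toLinearMap
  have hP (t : ℝ) : ℓ (q₁ t - q₂ t) = (P₁ - P₂).eval t := by
    simp [← hP₁, ← hP₂]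
  have hlim : Tendsto (fun t => (P₁ - P₂).eval t) atTop (𝓝 0) := by
    simpa only [← hP, map_zero, Function.comp_def] using (ℓ.continuous.tendsto 0).comp h
  obtain ⟨hlead, -⟩ := (P₁ - P₂).tendsto_nhds_iff.1 hlim
  rw [hP, leadingCoeff_eq_zero.1 hlead, eval_zero]

end PolyFun

lemma exists_pos_le_forall_lt {ι : Type*} [Finite ι] {α : ℝ} (hα : 0 < α) (x : ι → ℝ) :
    ∃ ε > 0, ε ≤ α ∧ ∀ j, 0 < x j → ε < x j := by
  have hsmall : ∀ᶠ ε in 𝓝[>] (0 : ℝ), ε ≤ α ∧ ∀ j, 0 < x j → ε < x j :=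
    nhdsWithin_le_nhds <| (eventually_le_nhds hα).and <| eventually_all.2 fun j => by
      by_cases hj : 0 < x j
      · filter_upwards [eventually_lt_nhds hj] with ε hε using fun _ => hε
      · exact Eventually.of_forall fun _ h => absurd h hj
  obtain ⟨ε, ⟨hεα, hεx⟩, hε⟩ := (hsmall.and self_mem_nhdsWithin).exists
  exact ⟨ε, hε, hεα, hεx⟩

lemma Module.Basis.coord_apply_of_apply_eq_smul {ι R M : Type*} [CommRing R] [AddCommGroup M]
    [Module R M] (b : Module.Basis ι R M) {L : M →ₗ[R] M} {d : ι → R}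
    (hb : ∀ j, L (b j) = d j • b j) (j : ι) (v : M) : b.coord j (L v) = d j * b.coord j v := by
  have : (b.coord j).comp L = d j • b.coord j := b.ext fun k => by
    rcases eq_or_ne k j with rfl | hkj
    · simp [hb]
    · simp [hb, hkj]
  exact LinearMap.congr_fun this v

section Eigenbasis

variable {E ι : Type*} [NormedAddCommGroup E] [NormedSpace ℝ E]
  {L : E →ₗ[ℝ] E} {d : ι → ℝ} {lam : ℝ}

lemma hasDerivAt_sum_eval_smul_of_eigen [Fintype ι] {v : ι → E} (hv : ∀ j, L (v j) = d j • v j)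
    {Q P : ι → ℝ[X]} (hQ : ∀ j, derivative (Q j) = C (lam - d j) * Q j + P j) (t : ℝ) :
    HasDerivAt (fun t => ∑ j, (Q j).eval t • v j)
      (-(L (∑ j, (Q j).eval t • v j) - lam • ∑ j, (Q j).eval t • v j) +
        ∑ j, (P j).eval t • v j) t := by
  refine (HasDerivAt.fun_sum fun j _ => ((Q j).hasDerivAt t).smul_const (v j)).congr_deriv ?_
  simp only [hQ, eval_add, eval_mul, eval_C, map_sum, map_smul, hv, Finset.smul_sum, smul_smul,
    ← Finset.sum_sub_distrib, ← Finset.sum_neg_distrib, ← Finset.sum_add_distrib]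
  refine Finset.sum_congr rfl fun j _ => ?_
  module

variable [FiniteDimensional ℝ E] (b : Module.Basis ι ℝ E)

lemma hasDerivWithinAt_coord_of_eigen (hb : ∀ j, L (b j) = d j • b j) {y : ℝ → E} {u : E}
    {s : Set ℝ} {t : ℝ} (hy : HasDerivWithinAt y (-(L (y t) - lam • y t) + u) s t) (j : ι) :
    HasDerivWithinAt (fun t => b.coord j (y t))
      ((lam - d j) * b.coord j (y t) + b.coord j u) s t := by
  refine ((LinearMap.toContinuousLinearMap (b.coord j)).hasFDerivAt.comp_hasDerivWithinAt t
    hy).congr_deriv ?_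
  simp only [LinearMap.coe_toContinuousLinearMap', map_add, map_neg, map_sub, map_smul,
    b.coord_apply_of_apply_eq_smul hb, smul_eq_mul]
  ring

variable [Fintype ι] (hb : ∀ j, L (b j) = d j • b j) {p : ℝ → E} (hp : IsPolyFun p) {T α : ℝ}
  {g : ℝ → E} (hα : 0 < α) (hg : ∃ C T', ∀ t ≥ T', ‖g t‖ ≤ C * exp (-α * t)) {y : ℝ → E}
  (hy : ∀ t ∈ Ici T, HasDerivWithinAt y (-(L (y t) - lam • y t) + p t + g t) (Ici T) t)
  (hside : ∀ j, d j < lam → Tendsto (fun t => exp ((d j - lam) * t) * ‖y t‖) atTop (𝓝 0))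
include hb hp hα hg hy hside

theorem exists_polyFun_sub_isBigO :
    ∃ q : ℝ → E, IsPolyFun q ∧ (∀ t, HasDerivAt q (-(L (q t) - lam • q t) + p t) t) ∧
      ∃ ε > 0, (fun t => y t - q t) =O[atTop] fun t => exp (-ε * t) := by
  obtain ⟨Cg, T', hgT'⟩ := hg
  set T₀ := max T T'
  set coordCLM := fun j => LinearMap.toContinuousLinearMap (b.coord j)
  choose P hP using fun j => hp.exists_eval_eq (b.coord j)
  obtain ⟨ε, hε, hεα, hεd⟩ := exists_pos_le_forall_lt hα fun j => d j - lam
  have hscalar (j : ι) : ∃ Q : ℝ[X], derivative Q = C (lam - d j) * Q + P j ∧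
      (fun t => b.coord j (y t) - Q.eval t) =O[atTop] fun t => exp (-ε * t) := by
    refine exists_polynomial_sub_isBigO (T := T₀) (G := fun t => b.coord j (g t))
      (c := ‖coordCLM j‖ * Cg) (P j) hα (fun t ht => ?_) (fun t ht => ?_) (fun hj => ?_) hεα
      (fun hj => neg_sub lam (d j) ▸ hεd j (by linarith))
    · have hyt := (hy t (mem_Ici.2 (le_trans (le_max_left _ _) ht))).mono
        (Ici_subset_Ici.2 (le_max_left T T'))
      rw [add_assoc] at hyt
      refine (hasDerivWithinAt_coord_of_eigen b hb hyt j).congr_deriv ?_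
      rw [map_add, hP]
      ring
    · calc |b.coord j (g t)| ≤ ‖coordCLM j‖ * ‖g t‖ := (coordCLM j).le_opNorm (g t)
        _ ≤ ‖coordCLM j‖ * (Cg * exp (-α * t)) := by
          gcongr; exact hgT' t (le_trans (le_max_right _ _) ht)
        _ = _ := by rw [neg_mul]; ring
    · refine squeeze_zero_norm (fun t => ?_)
        (by simpa using (hside j (by linarith)).const_mul ‖coordCLM j‖)
      rw [norm_mul, norm_of_nonneg (exp_pos _).le,
        show -((lam - d j) * t) = (d j - lam) * t by ring, mul_left_comm]
      gcongr
      exact (coordCLM j).le_opNorm (y t)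
  choose Q hQ hQy using hscalar
  refine ⟨fun t => ∑ j, (Q j).eval t • b j, isPolyFun_sum_eval_smul Q b, fun t => ?_, ε, hε, ?_⟩
  · convert hasDerivAt_sum_eval_smul_of_eigen hb hQ t using 2
    simp only [← hP, b.coord_apply, b.sum_repr]
  have hdecomp (t : ℝ) : y t - ∑ j, (Q j).eval t • b j
      = ∑ j, (b.coord j (y t) - (Q j).eval t) • b j := by
    simp only [sub_smul, Finset.sum_sub_distrib, b.coord_apply, b.sum_repr]
  simp only [hdecomp]
  refine IsBigO.fun_sum fun j _ => (isBigO_of_le' (c := ‖b j‖) _ fun t => ?_).trans (hQy j)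
  rw [norm_smul, mul_comm]

theorem existsUnique_polyFun_approx :
    ∃! q : ℝ → E, IsPolyFun q ∧ (∀ t, HasDerivAt q (-(L (q t) - lam • q t) + p t) t) ∧
      ∃ ε > (0 : ℝ), ∃ C T', ∀ t ≥ T', ‖y t - q t‖ ≤ C * exp (-ε * t) := by
  obtain ⟨q, hq, hq', ε, hε, hyq⟩ := exists_polyFun_sub_isBigO b hb hp hα hg hy hside
  refine ⟨q, ⟨hq, hq', ε, hε, isBigO_exp_neg_mul_iff.1 hyq⟩, ?_⟩
  rintro q₂ ⟨hq₂, -, ε₂, hε₂, hyq₂⟩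
  refine hq₂.eq_of_tendsto_sub hq ?_
  have h₁ := hyq.trans_tendsto (tendsto_exp_neg_mul_atTop_nhds_zero hε)
  have h₂ := (isBigO_exp_neg_mul_iff.2 hyq₂).trans_tendsto (tendsto_exp_neg_mul_atTop_nhds_zero hε₂)
  simpa using h₁.sub h₂

end Eigenbasis

lemma Matrix.exists_basis_toEuclideanLin_eq_smul {n : Type*} [Fintype n] [DecidableEq n]
    {A S : Matrix n n ℝ} (hS : IsUnit S.det) {d₀ : n → ℝ} (hA : A = S⁻¹ * diagonal d₀ * S) :
    ∃ b : Module.Basis n ℝ (EuclideanSpace ℝ n), ∀ j, toEuclideanLin A (b j) = d₀ j • b j := by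
  let e : EuclideanSpace ℝ n ≃ₗ[ℝ] EuclideanSpace ℝ n :=
    .ofLinearMap (toEuclideanLin S⁻¹) (toEuclideanLin S)
      (by rw [← toLpLin_mul, nonsing_inv_mul S hS, toLpLin_one])
      (by rw [← toLpLin_mul, mul_nonsing_inv S hS, toLpLin_one])
  refine ⟨(EuclideanSpace.basisFun n ℝ).toBasis.map e, fun j => ?_⟩
  have hAS : A * S⁻¹ = S⁻¹ * diagonal d₀ := by
    rw [hA, Matrix.mul_assoc, mul_nonsing_inv S hS, Matrix.mul_one]
  simp only [e, Module.Basis.map_apply, OrthonormalBasis.coe_toBasis,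
    EuclideanSpace.basisFun_apply, LinearEquiv.coe_ofLinearMap]
  rw [← LinearMap.comp_apply, ← toLpLin_mul, hAS, toLpLin_mul, LinearMap.comp_apply, ← map_smul]
  congr 1
  ext k
  simp [toLpLin_apply]

theorem stmt_12_general {d : ℕ} (A S : Matrix (Fin d) (Fin d) ℝ) (hS : IsUnit S.det)
    (d₀ : Fin d → ℝ)
    (hA : A = S⁻¹ * Matrix.diagonal d₀ * S)
    (lam : ℝ)
    (p : ℝ → EuclideanSpace ℝ (Fin d)) (hp : IsPolyFun p)
    (T : ℝ) (g : ℝ → EuclideanSpace ℝ (Fin d))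
    (α : ℝ) (hα : 0 < α)
    (hg : ∃ C T', ∀ t ≥ T', ‖g t‖ ≤ C * Real.exp (-α * t))
    (y : ℝ → EuclideanSpace ℝ (Fin d))
    (hy : ∀ t ∈ Ici T, HasDerivWithinAt y
      (-(Matrix.toEuclideanLin A (y t) - lam • y t) + p t + g t) (Ici T) t)
    (hside : ∀ lamBar : ℝ,
      (lamBar ∈ Finset.image d₀ Finset.univ ∧ lamBar < lam ∧
        ∀ mu ∈ Finset.image d₀ Finset.univ, mu < lam → mu ≤ lamBar) →
      Filter.Tendsto (fun t => Real.exp ((lamBar - lam) * t) * ‖y t‖)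
        Filter.atTop (nhds 0)) :
    ∃! q : ℝ → EuclideanSpace ℝ (Fin d), IsPolyFun q ∧
      (∀ t : ℝ, HasDerivAt q (-(Matrix.toEuclideanLin A (q t) - lam • q t) + p t) t) ∧
      ∃ ε > (0 : ℝ), ∃ C T', ∀ t ≥ T', ‖y t - q t‖ ≤ C * Real.exp (-ε * t) := by
  obtain ⟨b, hb⟩ := exists_basis_toEuclideanLin_eq_smul hS hA
  refine existsUnique_polyFun_approx b hb hp hα hg hy fun j hj => ?_
  set below := (Finset.univ.image d₀).filter (· < lam)
  have hj' : d₀ j ∈ below := by simp [below, hj]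
  obtain ⟨hmem, hlt⟩ := Finset.mem_filter.1 (below.max'_mem ⟨_, hj'⟩)
  refine tendsto_exp_mul_mul_of_le (fun t => norm_nonneg _)
    (by linarith [below.le_max' _ hj']) (hside _ ⟨hmem, hlt, fun mu hmu hmulam => ?_⟩)
  exact below.le_max' mu (Finset.mem_filter.2 ⟨hmu, hmulam⟩)

/-- Key approximation lemma: if `y' = -(A - λI)y + p(t) + g(t)` with `p` polynomial
and `g` exponentially decaying (plus the side condition when `λ > λ₁`), then there
is a unique polynomial `q` with `q' = -(A - λI)q + p` and `|y - q| = O(e^{-εt})`. -/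
theorem stmt_12 {d : ℕ} (A S : Matrix (Fin d) (Fin d) ℝ) (hS : IsUnit S.det)
    (d₀ : Fin d → ℝ) (hpos : ∀ i, 0 < d₀ i)
    (hA : A = S⁻¹ * Matrix.diagonal d₀ * S)
    (lam : ℝ) (hlam : 0 < lam)
    (p : ℝ → EuclideanSpace ℝ (Fin d)) (hp : IsPolyFun p)
    (T : ℝ) (g : ℝ → EuclideanSpace ℝ (Fin d))
    (hgcont : ContinuousOn g (Ici T))
    (α : ℝ) (hα : 0 < α)
    (hg : ∃ C T', ∀ t ≥ T', ‖g t‖ ≤ C * Real.exp (-α * t))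
    (y : ℝ → EuclideanSpace ℝ (Fin d))
    (hy : ∀ t ∈ Ici T, HasDerivWithinAt y
      (-(Matrix.toEuclideanLin A (y t) - lam • y t) + p t + g t) (Ici T) t)
    (hside : ∀ lamBar : ℝ,
      (lamBar ∈ Finset.image d₀ Finset.univ ∧ lamBar < lam ∧
        ∀ mu ∈ Finset.image d₀ Finset.univ, mu < lam → mu ≤ lamBar) →
      Filter.Tendsto (fun t => Real.exp ((lamBar - lam) * t) * ‖y t‖)
        Filter.atTop (nhds 0)) :
    ∃! q : ℝ → EuclideanSpace ℝ (Fin d), IsPolyFun q ∧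
      (∀ t : ℝ, HasDerivAt q (-(Matrix.toEuclideanLin A (q t) - lam • q t) + p t) t) ∧
      ∃ ε > (0 : ℝ), ∃ C T', ∀ t ≥ T', ‖y t - q t‖ ≤ C * Real.exp (-ε * t) :=
  stmt_12_general A S hS d₀ hA lam p hp T g α hα hg y hy hside
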